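/- arXiv:1804.09974 — 2 statements merged into one kernel-verified Lean document; each statement's English description precedes it below -/
import Mathlib

section
/- If S and T are formal series of words (elements of R⟨⟨A⟩⟩) with S_∅ = T_∅ = 1 that both satisfy the shuffle relations (S, u ⧢ v) = (S,u)(S,v) for all words u, v, then their concatenation (convolution) product ST also has (ST)_∅ = 1 and satisfies the shuffle relations. Equivalently, the set of shuffle-multiplicative series with constant term 1 is closed under the convolution product (the shuffle group). -/
noncomputable def shuffle {A : Type*} : List A → List A → (List A →₀ ℝ)
  | [], v => Finsupp.single v 1
  | u@(_ :: _), [] => Finsupp.single u 1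
  | a :: u, b :: v =>
      Finsupp.mapDomain (a :: ·) (shuffle u (b :: v)) +
      Finsupp.mapDomain (b :: ·) (shuffle (a :: u) v)
  termination_by u v => u.length + v.length
  decreasing_by all_goals (simp; try omega)
/-- The convolution (deconcatenation) product on sequences of real coefficients
indexed by words: `(c * d)_w = Σ c_{prefix} d_{suffix}` over all ways of writing
`w` as a concatenation of two (possibly empty) words. -/
noncomputable def conv {A : Type*} (c d : List A → ℝ) : List A → ℝ :=
  fun w => ∑ m ∈ Finset.range (w.length + 1), c (w.take m) * d (w.drop m)

/-- The sequence `δ`, with `δ_∅ = 1` and `δ_w = 0` for nonempty `w`. -/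
def deltaSeq {A : Type*} : List A → ℝ :=
  fun w => match w with | [] => 1 | _ :: _ => 0

/-- Pairing `(S, p) = Σ_w S_w p_w` between a formal series `S ∈ R⟨⟨A⟩⟩` (a
function on words) and a finite linear combination of words `p`. -/
noncomputable def pairF {A : Type*} (S : List A → ℝ) (p : List A →₀ ℝ) : ℝ :=
  p.sum fun w c => S w * c

section Aux

variable {A : Type*}

lemma shuffle_nil_left (v : List A) : shuffle [] v = Finsupp.single v 1 := by
  simp [shuffle]

lemma shuffle_nil_right (u : List A) : shuffle u [] = Finsupp.single u 1 := by
  cases u <;> simp [shuffle]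

lemma shuffle_cons (a b : A) (u v : List A) :
    shuffle (a :: u) (b :: v) =
      Finsupp.mapDomain (a :: ·) (shuffle u (b :: v)) +
      Finsupp.mapDomain (b :: ·) (shuffle (a :: u) v) := by
  rw [shuffle]

lemma pairF_single (S : List A → ℝ) (w : List A) : pairF S (Finsupp.single w 1) = S w := by
  simp [pairF, Finsupp.sum_single_index]

lemma pairF_add (S : List A → ℝ) (p q : List A →₀ ℝ) :
    pairF S (p + q) = pairF S p + pairF S q := by
  unfold pairF
  exact Finsupp.sum_add_index' (by simp) (by intros; ring)

lemma pairF_mapDomain (S : List A → ℝ) (f : List A → List A) (p : List A →₀ ℝ) :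
    pairF S (Finsupp.mapDomain f p) = pairF (fun w => S (f w)) p := by
  unfold pairF
  apply Finsupp.sum_mapDomain_index <;> intros <;> ring

lemma pairF_funAdd (f g : List A → ℝ) (p : List A →₀ ℝ) :
    pairF (fun w => f w + g w) p = pairF f p + pairF g p := by
  unfold pairF
  simp only [add_mul]
  exact Finsupp.sum_add

lemma pairF_funSmul (x : ℝ) (f : List A → ℝ) (p : List A →₀ ℝ) :
    pairF (fun w => x * f w) p = x * pairF f p := by
  unfold pairF
  rw [Finsupp.mul_sum]
  simp [mul_assoc]

lemma pairF_shuffle_cons (S : List A → ℝ) (a b : A) (x y : List A) :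
    pairF S (shuffle (a :: x) (b :: y)) =
      pairF (fun w => S (a :: w)) (shuffle x (b :: y)) +
      pairF (fun w => S (b :: w)) (shuffle (a :: x) y) := by
  rw [shuffle_cons, pairF_add, pairF_mapDomain, pairF_mapDomain]

lemma conv_cons (S T : List A → ℝ) (a : A) (w : List A) :
    conv S T (a :: w) = S [] * T (a :: w) + conv (fun x => S (a :: x)) T w := by
  unfold conv
  rw [Finset.sum_range_succ']
  simp [add_comm]

/-- The deconcatenation coproduct is a morphism for the shuffle product:
pairing the convolution product `ST` against `u ⧢ v` expands over all
splittings of `u` and `v`. -/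
lemma pairF_conv_shuffle_key (n : ℕ) :
    ∀ (u v : List A), u.length + v.length = n → ∀ (S T : List A → ℝ),
    pairF (conv S T) (shuffle u v) =
      ∑ i ∈ Finset.range (u.length + 1), ∑ j ∈ Finset.range (v.length + 1),
        pairF S (shuffle (u.take i) (v.take j)) * pairF T (shuffle (u.drop i) (v.drop j)) := by
  induction n using Nat.strong_induction_on with
  | _ n ih =>
  intro u v hn S T
  match u, v with
  | [], v =>
      simp [shuffle_nil_left, pairF_single, conv]
  | a :: u', [] =>
      simp [shuffle_nil_right, pairF_single, conv]
  | a :: u', b :: v' =>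
      have hu : u'.length + (b :: v').length < n := by simp at hn ⊢; omega
      have hv : (a :: u').length + v'.length < n := by simp at hn ⊢; omega
      rw [pairF_shuffle_cons]
      have e1 : ∀ (p : List A →₀ ℝ),
          pairF (fun w => conv S T (a :: w)) p
            = S [] * pairF (fun w => T (a :: w)) p + pairF (conv (fun x => S (a :: x)) T) p := by
        intro p
        have : (fun w => conv S T (a :: w))
            = fun w => (S [] * T (a :: w)) + conv (fun x => S (a :: x)) T w := by
          funext w; rw [conv_cons]
        rw [this, pairF_funAdd, pairF_funSmul]
      have e2 : ∀ (p : List A →₀ ℝ),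
          pairF (fun w => conv S T (b :: w)) p
            = S [] * pairF (fun w => T (b :: w)) p + pairF (conv (fun x => S (b :: x)) T) p := by
        intro p
        have : (fun w => conv S T (b :: w))
            = fun w => (S [] * T (b :: w)) + conv (fun x => S (b :: x)) T w := by
          funext w; rw [conv_cons]
        rw [this, pairF_funAdd, pairF_funSmul]
      rw [e1, e2,
        ih _ hu u' (b :: v') rfl (fun x => S (a :: x)) T,
        ih _ hv (a :: u') v' rfl (fun x => S (b :: x)) T]
      simp only [List.length_cons, Finset.sum_range_succ', List.take_succ_cons,
        List.drop_succ_cons, List.take_zero, List.drop_zero, List.take_nil, List.drop_nil,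
        shuffle_nil_left, shuffle_nil_right, pairF_single, pairF_shuffle_cons,
        add_mul, mul_add, Finset.sum_add_distrib]
      ring

end Aux

/-- if `S, T ∈ R⟨⟨A⟩⟩` have `S_∅ = T_∅ = 1` and both satisfy the
shuffle relations `(S, u ⧢ v) = (S,u)(S,v)`, then their concatenation
(convolution) product `ST` has `(ST)_∅ = 1` and satisfies the shuffle relations:
the shuffle group is closed under the convolution product. -/
theorem shuffle_group_closed {A : Type*} (S T : List A → ℝ)
    (hS0 : S [] = 1) (hT0 : T [] = 1)
    (hS : ∀ u v : List A, pairF S (shuffle u v) = S u * S v)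
    (hT : ∀ u v : List A, pairF T (shuffle u v) = T u * T v) :
    conv S T [] = 1 ∧
    ∀ u v : List A, pairF (conv S T) (shuffle u v) = conv S T u * conv S T v := by
  constructor
  · simp [conv, hS0, hT0]
  · intro u v
    rw [pairF_conv_shuffle_key (u.length + v.length) u v rfl S T]
    unfold conv
    rw [Finset.sum_mul_sum]
    refine Finset.sum_congr rfl fun i _ => Finset.sum_congr rfl fun j _ => ?_
    rw [hS, hT]
    ring
end

section
/- Chen's relation for iterated integrals of smooth paths: for continuously differentiable driving paths and times t₀ ≤ t₁ ≤ t₂, the Chen series J(t₂;t₀) = Σ_w J_w(t₂;t₀) w equals the concatenation product J(t₁;t₀)·J(t₂;t₁). Equivalently, for each word w = ℓ₁…ℓₙ, J_{ℓ₁…ℓₙ}(t₂;t₀) = Σ_{m=0}^{n} J_{ℓ₁…ℓ_m}(t₁;t₀)·J_{ℓ_{m+1}…ℓₙ}(t₂;t₁). -/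
/-- Auxiliary recursion for iterated integrals: the head of the list is the
letter integrated outermost.  `Jrev B' (ℓ :: w) s t = ∫_s^t Jrev B' w s r · B'_ℓ(r) dr`. -/
noncomputable def Jrev {A : Type*} (B' : A → ℝ → ℝ) : List A → ℝ → ℝ → ℝ
  | [], _, _ => 1
  | ℓ :: w, s, t => ∫ r in s..t, Jrev B' w s r * B' ℓ r

/-- The iterated integral `J_w(t; s)` of a word `w = ℓ₁…ℓₙ` (list in reading
order) against the differentiable driving paths with derivatives `B'_ℓ`:
`J_∅ = 1` and `J_{wℓ}(t;s) = ∫_s^t J_w(r;s) B'_ℓ(r) dr` (the last letter is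
integrated outermost, as in the paper's recursion). -/
noncomputable def Jit {A : Type*} (B' : A → ℝ → ℝ) (w : List A) (s t : ℝ) : ℝ :=
  Jrev B' w.reverse s t

lemma jrev_continuous {A : Type*} (B' : A → ℝ → ℝ) (hB' : ∀ ℓ, Continuous (B' ℓ))
    (u : List A) (s : ℝ) : Continuous (Jrev B' u s) := by
  induction u with
  | nil => exact continuous_const
  | cons ℓ v ih =>
    show Continuous fun t => ∫ r in s..t, Jrev B' v s r * B' ℓ r
    exact intervalIntegral.continuous_primitive
      (fun a b => ((ih.mul (hB' ℓ)).intervalIntegrable a b)) s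

lemma jrev_chen {A : Type*} (B' : A → ℝ → ℝ) (hB' : ∀ ℓ, Continuous (B' ℓ))
    (t₀ t₁ : ℝ) (u : List A) : ∀ t₂, t₁ ≤ t₂ →
    Jrev B' u t₀ t₂ =
      ∑ k ∈ Finset.range (u.length + 1),
        Jrev B' (u.take k) t₁ t₂ * Jrev B' (u.drop k) t₀ t₁ := by
  induction u with
  | nil => intro t₂ _; simp [Jrev]
  | cons ℓ v ih =>
    intro t₂ h12
    have hcont : ∀ (w : List A) (s : ℝ), Continuous (Jrev B' w s) :=
      jrev_continuous B' hB'
    have hint : ∀ (w : List A) (s a b : ℝ) (ℓ' : A),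
        IntervalIntegrable (fun r => Jrev B' w s r * B' ℓ' r) MeasureTheory.volume a b :=
      fun w s a b ℓ' => ((hcont w s).mul (hB' ℓ')).intervalIntegrable a b
    have hsplit : Jrev B' (ℓ :: v) t₀ t₂ =
        (∫ r in t₀..t₁, Jrev B' v t₀ r * B' ℓ r) +
        ∫ r in t₁..t₂, Jrev B' v t₀ r * B' ℓ r := by
      show (∫ r in t₀..t₂, Jrev B' v t₀ r * B' ℓ r) = _
      rw [intervalIntegral.integral_add_adjacent_intervals (hint v t₀ t₀ t₁ ℓ)
        (hint v t₀ t₁ t₂ ℓ)]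
    have hmid : (∫ r in t₁..t₂, Jrev B' v t₀ r * B' ℓ r) =
        ∑ k ∈ Finset.range (v.length + 1),
          Jrev B' (ℓ :: v.take k) t₁ t₂ * Jrev B' (v.drop k) t₀ t₁ := by
      have h1 : (∫ r in t₁..t₂, Jrev B' v t₀ r * B' ℓ r) =
          ∫ r in t₁..t₂, ∑ k ∈ Finset.range (v.length + 1),
            Jrev B' (v.take k) t₁ r * Jrev B' (v.drop k) t₀ t₁ * B' ℓ r := by
        apply intervalIntegral.integral_congr
        intro r hr
        rw [Set.uIcc_of_le h12] at hr
        dsimp only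
        rw [ih r hr.1, Finset.sum_mul]
      rw [h1, intervalIntegral.integral_finset_sum]
      · apply Finset.sum_congr rfl
        intro k _
        have : (fun r => Jrev B' (v.take k) t₁ r * Jrev B' (v.drop k) t₀ t₁ * B' ℓ r)
            = fun r => Jrev B' (v.drop k) t₀ t₁ * (Jrev B' (v.take k) t₁ r * B' ℓ r) := by
          funext r; ring
        rw [this, intervalIntegral.integral_const_mul]
        show _ = Jrev B' (ℓ :: v.take k) t₁ t₂ * _
        rw [show Jrev B' (ℓ :: v.take k) t₁ t₂
            = ∫ r in t₁..t₂, Jrev B' (v.take k) t₁ r * B' ℓ r from rfl]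
        ring
      · intro k _
        have : (fun r => Jrev B' (v.take k) t₁ r * Jrev B' (v.drop k) t₀ t₁ * B' ℓ r)
            = fun r => Jrev B' (v.drop k) t₀ t₁ * (Jrev B' (v.take k) t₁ r * B' ℓ r) := by
          funext r; ring
        rw [this]
        exact (hint (v.take k) t₁ t₁ t₂ ℓ).const_mul _
    have h0 : (∫ r in t₀..t₁, Jrev B' v t₀ r * B' ℓ r)
        = Jrev B' ((ℓ :: v).take 0) t₁ t₂ * Jrev B' ((ℓ :: v).drop 0) t₀ t₁ := by
      simp [Jrev]
    rw [hsplit, hmid, h0]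
    conv_rhs => rw [Finset.sum_range_succ']
    rw [add_comm]
    simp only [List.length_cons, List.take_succ_cons, List.drop_succ_cons]

/-- Chen's relation for iterated integrals of smooth paths: for
`t₀ ≤ t₁ ≤ t₂` and each word `w = ℓ₁…ℓₙ`,
`J_w(t₂;t₀) = Σ_{m=0}^{n} J_{ℓ₁…ℓ_m}(t₁;t₀) · J_{ℓ_{m+1}…ℓₙ}(t₂;t₁)`,
i.e. the Chen series satisfies `J(t₂;t₀) = J(t₁;t₀)·J(t₂;t₁)` (concatenation
product, whose coefficients are given by deconcatenation). -/
theorem chen_relation {A : Type*} (B' : A → ℝ → ℝ) (hB' : ∀ ℓ, Continuous (B' ℓ))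
    (t₀ t₁ t₂ : ℝ) (h01 : t₀ ≤ t₁) (h12 : t₁ ≤ t₂) (w : List A) :
    Jit B' w t₀ t₂ =
      ∑ m ∈ Finset.range (w.length + 1),
        Jit B' (w.take m) t₀ t₁ * Jit B' (w.drop m) t₁ t₂ := by
  have := jrev_chen B' hB' t₀ t₁ w.reverse t₂ h12
  rw [Jit, this, List.length_reverse]
  rw [← Finset.sum_range_reflect]
  apply Finset.sum_congr rfl
  intro k hk
  rw [Finset.mem_range, Nat.lt_succ_iff] at hk
  have hidx : w.length + 1 - 1 - k = w.length - k := by omega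
  rw [hidx]
  simp only [Jit, List.reverse_take, List.reverse_drop, List.length_reverse]
  ring
end
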